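/- The transition matrix Q of the Hata map with p = 1/2 on the state space S = {−,+}×ℕ is irreducible and recurrent: for all s,t ∈ S there exists n ≥ 1 with q^{(n)}(s,t) > 0 (q^{(n)} the n-step transition probability), and Σ_{n≥1} q^{(n)}(s,s) = ∞ for every s ∈ S. -/

import Mathlib

open scoped ENNReal Classical

noncomputable section

/-- The state space of the Markov chain for the Hata map: `(false,k)` codes `I_k^-`
and `(true,k)` codes `I_k^+`. -/
abbrev S : Type := Bool × ℕ

/-- The transition matrix `Q` of the Hata map with `p = 1/2`:
`q((±,k),(±,k±1)) = 1/2` (same sign, neighbouring index) and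
`q((∓,0),(±,j)) = 2^{-(j+2)}`; all other entries vanish. -/
def qH : S → S → ℝ≥0∞ := fun s t =>
  if s.1 = t.1 ∧ (t.2 = s.2 + 1 ∨ s.2 = t.2 + 1) then 1/2
  else if s.1 ≠ t.1 ∧ s.2 = 0 then (1/2)^(t.2+2)
  else 0

/-- The `n`-step transition probabilities of a transition matrix `p`. -/
def nstep {ι : Type*} (p : ι → ι → ℝ≥0∞) : ℕ → ι → ι → ℝ≥0∞
  | 0 => fun i j => if i = j then 1 else 0
  | n+1 => fun i j => ∑' k : ι, nstep p n i k * p k j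

/-!
Every state steps down to the gate `(±, 0)` of its branch; from there the walk climbs its own
branch one step at a time or jumps to any state of the other branch, so all states communicate
and recurrence of `(-, 0)` spreads to every state.

If the Green function `G = ∑ₙ q⁽ⁿ⁾(·, (-, 0))` were finite, it would be harmonic away from
`(-, 0)`, hence concave along each branch, and, being nonnegative, nondecreasing there. The
first-step equations at the two gates then give `G(-,0) ≥ 1 + (G(-,0) + G(+,0)) / 2` and
`G(+,0) ≥ (G(+,0) + G(-,0)) / 2`, and adding them yields `0 ≥ 1`.
-/

section Chain

variable {ι : Type*} (p : ι → ι → ℝ≥0∞)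

theorem nstep_zero (s t : ι) : nstep p 0 s t = if s = t then 1 else 0 := rfl

theorem nstep_succ (n : ℕ) (s t : ι) : nstep p (n + 1) s t = ∑' u, nstep p n s u * p u t := rfl

theorem nstep_one (s t : ι) : nstep p 1 s t = p s t := by
  rw [nstep_succ, tsum_eq_single s fun u hu => by simp [nstep_zero, Ne.symm hu]]
  simp [nstep_zero]

theorem nstep_add (m n : ℕ) (s t : ι) :
    nstep p (m + n) s t = ∑' u, nstep p m s u * nstep p n u t := by
  induction n generalizing t with
  | zero =>
    rw [Nat.add_zero, tsum_eq_single t fun u hu => by simp [nstep_zero, hu]]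
    simp [nstep_zero]
  | succ n ih =>
    calc nstep p (m + (n + 1)) s t
        = ∑' v, (∑' u, nstep p m s u * nstep p n u v) * p v t := by
          simp only [← add_assoc, nstep_succ, ih]
      _ = ∑' u, nstep p m s u * ∑' v, nstep p n u v * p v t := by
          simp only [← ENNReal.tsum_mul_right, ← ENNReal.tsum_mul_left, mul_assoc]
          exact ENNReal.tsum_comm
      _ = ∑' u, nstep p m s u * nstep p (n + 1) u t := rfl

theorem mul_nstep_le_nstep_add (m n : ℕ) (s u t : ι) :
    nstep p m s u * nstep p n u t ≤ nstep p (m + n) s t := by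
  rw [nstep_add]
  exact ENNReal.le_tsum u

theorem exists_nstep_succ_pos_of_transGen {s t : ι}
    (h : Relation.TransGen (fun a b => 0 < p a b) s t) : ∃ n, 0 < nstep p (n + 1) s t := by
  induction h with
  | single hst => exact ⟨0, by rwa [nstep_one]⟩
  | @tail u t _ hut ih =>
    obtain ⟨n, hn⟩ := ih
    refine ⟨n + 1, lt_of_lt_of_le ?_ (mul_nstep_le_nstep_add p (n + 1) 1 s u t)⟩
    rw [nstep_one]
    exact ENNReal.mul_pos hn.ne' hut.ne'

def green (s t : ι) : ℝ≥0∞ := ∑' n, nstep p n s t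

theorem green_self (s : ι) : green p s s = 1 + ∑' n, nstep p (n + 1) s s := by
  rw [green, tsum_eq_zero_add' ENNReal.summable, nstep_zero, if_pos rfl]

theorem green_self_eq_top_iff (s : ι) : green p s s = ⊤ ↔ ∑' n, nstep p (n + 1) s s = ⊤ := by
  simp [green_self]

theorem green_eq_add_tsum_mul_green (s t : ι) :
    green p s t = (if s = t then 1 else 0) + ∑' u, p s u * green p u t := by
  have hfirst (n : ℕ) : nstep p (n + 1) s t = ∑' u, p s u * nstep p n u t := by
    simp only [add_comm n 1, nstep_add, nstep_one]
  rw [green, tsum_eq_zero_add' ENNReal.summable, nstep_zero]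
  simp only [hfirst, green, ← ENNReal.tsum_mul_left]
  rw [ENNReal.tsum_comm]

theorem mul_green_le_green (m : ℕ) (s u t : ι) :
    nstep p m s u * green p u t ≤ green p s t :=
  calc nstep p m s u * green p u t
      = ∑' n, nstep p m s u * nstep p n u t := ENNReal.tsum_mul_left.symm
    _ ≤ ∑' n, nstep p (m + n) s t :=
        ENNReal.tsum_le_tsum fun n => mul_nstep_le_nstep_add p m n s u t
    _ ≤ green p s t := ENNReal.tsum_comp_le_tsum_of_injective (add_right_injective m) _

theorem green_ne_top_of_nstep_pos {m : ℕ} {s t : ι} (hst : 0 < nstep p m s t)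
    (hs : green p s s ≠ ⊤) : green p t s ≠ ⊤ := by
  intro ht
  have := mul_green_le_green p m s t s
  rw [ht, ENNReal.mul_top hst.ne', top_le_iff] at this
  exact hs this

theorem green_self_eq_top_of_communicate {a b : ℕ} {s t : ι} (hst : 0 < nstep p a s t)
    (hts : 0 < nstep p b t s) (ht : green p t t = ⊤) : green p s s = ⊤ := by
  have hloop (n : ℕ) : nstep p a s t * (nstep p n t t * nstep p b t s) ≤ nstep p (a + n + b) s s :=
    calc nstep p a s t * (nstep p n t t * nstep p b t s)
        ≤ nstep p a s t * nstep p (n + b) t s := by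
          gcongr
          exact mul_nstep_le_nstep_add p n b t t s
      _ ≤ nstep p (a + n + b) s s := by
          rw [add_assoc]
          exact mul_nstep_le_nstep_add p a (n + b) s t s
  refine top_le_iff.mp ?_
  calc ⊤ = nstep p a s t * (green p t t * nstep p b t s) := by
        rw [ht, ENNReal.top_mul hts.ne', ENNReal.mul_top hst.ne']
    _ = ∑' n, nstep p a s t * (nstep p n t t * nstep p b t s) := by
        rw [green, ENNReal.tsum_mul_left, ENNReal.tsum_mul_right]
    _ ≤ ∑' n, nstep p (a + n + b) s s := ENNReal.tsum_le_tsum hloop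
    _ ≤ green p s s :=
        ENNReal.tsum_comp_le_tsum_of_injective (fun x y h => by simpa using h) _

end Chain

theorem monotone_of_nonneg_of_concave {f : ℕ → ℝ} (hf : ∀ k, 0 ≤ f k)
    (hconc : ∀ k, f k + f (k + 2) ≤ 2 * f (k + 1)) : Monotone f := by
  refine monotone_nat_of_le_succ fun k => ?_
  by_contra! hdec
  set d := f k - f (k + 1)
  have hslope (n : ℕ) : f (k + n + 1) - f (k + n) ≤ -d := by
    induction n with
    | zero => simp [d]
    | succ n ih =>
      have h : f (k + n) + f (k + n + 1 + 1) ≤ 2 * f (k + n + 1) := hconc (k + n)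
      show f (k + n + 1 + 1) - f (k + n + 1) ≤ -d
      linarith
  have hdrop (n : ℕ) : f (k + n) ≤ f k - n * d := by
    induction n with
    | zero => simp
    | succ n ih =>
      show f (k + n + 1) ≤ _
      push_cast
      linarith [hslope n]
  obtain ⟨n, hn⟩ := exists_nat_gt (f k / d)
  have : f k < n * d := (div_lt_iff₀ (by linarith)).mp hn
  linarith [hdrop n, hf (k + n)]


theorem qH_up (b : Bool) (k : ℕ) : qH (b, k) (b, k + 1) = 1 / 2 := by simp [qH]

theorem qH_down (b : Bool) (k : ℕ) : qH (b, k + 1) (b, k) = 1 / 2 := by simp [qH]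

theorem qH_cross {b c : Bool} (h : b ≠ c) (j : ℕ) : qH (b, 0) (c, j) = (1 / 2) ^ (j + 2) := by
  simp [qH, h]

theorem reflTransGen_qH_pos (s t : S) : Relation.ReflTransGen (fun u v => 0 < qH u v) s t := by
  have down (b : Bool) (k : ℕ) : Relation.ReflTransGen (fun u v => 0 < qH u v) (b, k) (b, 0) := by
    induction k with
    | zero => rfl
    | succ k ih => exact ih.head (by simp [qH_down])
  have up (b : Bool) (k : ℕ) : Relation.ReflTransGen (fun u v => 0 < qH u v) (b, 0) (b, k) := by
    induction k with
    | zero => rfl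
    | succ k ih => exact ih.tail (by simp [qH_up])
  obtain ⟨b, k⟩ := s
  obtain ⟨c, l⟩ := t
  refine (down b k).trans ?_
  by_cases hbc : b = c
  · exact hbc ▸ up b l
  · exact .single (by rw [qH_cross hbc]; exact ENNReal.pow_pos (by norm_num) _)

theorem exists_nstep_qH_pos (s t : S) : ∃ n, 1 ≤ n ∧ 0 < nstep qH n s t := by
  obtain ⟨b, k⟩ := s
  have hst : Relation.TransGen (fun u v => 0 < qH u v) (b, k) t :=
    .head' (b := (b, k + 1)) (by simp [qH_up]) (reflTransGen_qH_pos _ t)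
  obtain ⟨n, hn⟩ := exists_nstep_succ_pos_of_transGen qH hst
  exact ⟨n + 1, by omega, hn⟩

theorem tsum_qH_succ_mul (f : S → ℝ≥0∞) (b : Bool) (k : ℕ) :
    ∑' u, qH (b, k + 1) u * f u = 1 / 2 * f (b, k) + 1 / 2 * f (b, k + 2) := by
  rw [tsum_eq_sum (s := {(b, k), (b, k + 2)}), Finset.sum_pair (by simp), qH_down, qH_up]
  rintro ⟨c, n⟩ hcn
  simp only [Finset.mem_insert, Finset.mem_singleton, Prod.mk.injEq] at hcn
  simp only [qH, mul_eq_zero]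
  left
  split_ifs with h₁ h₂ <;> simp_all

theorem tsum_qH_zero_mul (f : S → ℝ≥0∞) (b : Bool) :
    ∑' u, qH (b, 0) u * f u = 1 / 2 * f (b, 1) + ∑' j, (1 / 2) ^ (j + 2) * f (!b, j) := by
  have hsame : ∑' n, qH (b, 0) (b, n) * f (b, n) = 1 / 2 * f (b, 1) := by
    rw [tsum_eq_single 1 fun n hn => by simp [qH, hn], qH_up]
  have hcross : ∑' n, qH (b, 0) (!b, n) * f (!b, n) = ∑' j, (1 / 2) ^ (j + 2) * f (!b, j) := by
    simp only [qH_cross (Bool.not_ne_self b).symm]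
  calc ∑' u, qH (b, 0) u * f u = ∑' c, ∑' n, qH (b, 0) (c, n) * f (c, n) :=
        ENNReal.tsum_prod (f := fun c n => qH (b, 0) (c, n) * f (c, n))
    _ = _ := by
      rw [tsum_bool, ← hsame, ← hcross]
      cases b <;> simp only [Bool.not_false, Bool.not_true, add_comm]

theorem green_qH_succ (a b : Bool) (k : ℕ) :
    green qH (b, k + 1) (a, 0) =
      1 / 2 * green qH (b, k) (a, 0) + 1 / 2 * green qH (b, k + 2) (a, 0) := by
  rw [green_eq_add_tsum_mul_green, if_neg (by simp), zero_add, tsum_qH_succ_mul]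

theorem green_qH_zero (a b : Bool) :
    green qH (b, 0) (a, 0) = (if b = a then 1 else 0) +
      (1 / 2 * green qH (b, 1) (a, 0) + ∑' j, (1 / 2) ^ (j + 2) * green qH (!b, j) (a, 0)) := by
  rw [green_eq_add_tsum_mul_green, tsum_qH_zero_mul]
  simp

theorem monotone_green_qH {a b : Bool} (hfin : ∀ k, green qH (b, k) (a, 0) ≠ ⊤) :
    Monotone fun k => green qH (b, k) (a, 0) := by
  have hreal : Monotone fun k => (green qH (b, k) (a, 0)).toReal := by
    refine monotone_of_nonneg_of_concave (fun _ => ENNReal.toReal_nonneg) fun k => ?_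
    have h := congrArg ENNReal.toReal (green_qH_succ a b k)
    rw [ENNReal.toReal_add (by finiteness [hfin k]) (by finiteness [hfin (k + 2)]),
      ENNReal.toReal_mul, ENNReal.toReal_mul] at h
    norm_num at h
    linarith
  exact fun m n hmn => (ENNReal.toReal_le_toReal (hfin m) (hfin n)).mp (hreal hmn)

theorem tsum_half_pow_add_two : ∑' j : ℕ, (1 / 2 : ℝ≥0∞) ^ (j + 2) = 1 / 2 := by
  simp only [pow_add, ENNReal.tsum_mul_right, ENNReal.tsum_geometric, one_div,
    ENNReal.one_sub_inv_two, inv_inv]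
  rw [sq, ← mul_assoc, ENNReal.mul_inv_cancel two_ne_zero ENNReal.ofNat_ne_top, one_mul]

theorem add_half_mul_green_qH_le {a : Bool} (hmono : ∀ c, Monotone fun k => green qH (c, k) (a, 0))
    (b : Bool) :
    (if b = a then 1 else 0) + (1 / 2 * green qH (b, 0) (a, 0) + 1 / 2 * green qH (!b, 0) (a, 0))
      ≤ green qH (b, 0) (a, 0) := by
  calc _ = (if b = a then 1 else 0) + (1 / 2 * green qH (b, 0) (a, 0) +
          ∑' j, (1 / 2) ^ (j + 2) * green qH (!b, 0) (a, 0)) := by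
        rw [ENNReal.tsum_mul_right, tsum_half_pow_add_two]
    _ ≤ (if b = a then 1 else 0) + (1 / 2 * green qH (b, 1) (a, 0) +
          ∑' j, (1 / 2) ^ (j + 2) * green qH (!b, j) (a, 0)) := by
        gcongr with j
        · exact hmono b zero_le_one
        · exact hmono (!b) (Nat.zero_le j)
    _ = green qH (b, 0) (a, 0) := (green_qH_zero a b).symm

theorem green_qH_eq_top : green qH (false, 0) (false, 0) = ⊤ := by
  by_contra hne
  have hfin (t : S) : green qH t (false, 0) ≠ ⊤ := by
    obtain ⟨n, -, hn⟩ := exists_nstep_qH_pos (false, 0) t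
    exact green_ne_top_of_nstep_pos qH hn hne
  have hmono (c : Bool) := monotone_green_qH (a := false) (b := c) fun k => hfin _
  have hminus := add_half_mul_green_qH_le hmono false
  have hplus := add_half_mul_green_qH_le hmono true
  simp only [Bool.not_false, Bool.not_true, if_pos, Bool.true_eq_false, if_false,
    zero_add] at hminus hplus
  set x := green qH (false, 0) (false, 0)
  set y := green qH (true, 0) (false, 0)
  have hhalves (z : ℝ≥0∞) : 1 / 2 * z + 1 / 2 * z = z := by
    rw [← add_mul, ENNReal.add_halves, one_mul]
  have : x + y + 1 ≤ x + y :=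
    calc x + y + 1 = 1 + (1 / 2 * x + 1 / 2 * x) + (1 / 2 * y + 1 / 2 * y) := by
          rw [hhalves, hhalves]; ring
      _ = (1 + (1 / 2 * x + 1 / 2 * y)) + (1 / 2 * y + 1 / 2 * x) := by ring
      _ ≤ x + y := add_le_add hminus hplus
  exact (ENNReal.lt_add_right (ENNReal.add_ne_top.mpr ⟨hne, hfin _⟩) one_ne_zero).not_ge this

/-- The transition matrix `Q` of the Hata map with `p = 1/2` is irreducible and recurrent:
for all states `s,t` there is `n ≥ 1` with `q^{(n)}(s,t) > 0`, and
`∑_{n≥1} q^{(n)}(s,s) = ∞` for every state `s`. -/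
theorem hata_chain_irreducible_recurrent :
    (∀ s t : S, ∃ n : ℕ, 1 ≤ n ∧ 0 < nstep qH n s t)
    ∧ (∀ s : S, ∑' n : ℕ, nstep qH (n+1) s s = ⊤) := by
  refine ⟨exists_nstep_qH_pos, fun s => (green_self_eq_top_iff qH s).mp ?_⟩
  obtain ⟨m, -, hm⟩ := exists_nstep_qH_pos s (false, 0)
  obtain ⟨n, -, hn⟩ := exists_nstep_qH_pos (false, 0) s
  exact green_self_eq_top_of_communicate qH hm hn green_qH_eq_top

end
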